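/- Let R be a φ-Prüfer ring such that Nil(R) is not a maximal ideal of R, and let T be a ring containing R such that Spec(R) = Spec(T). Then R = T. -/

import Mathlib

/-- A subset `S` of a ring `A` is (the underlying set of) a prime ideal of the subring `B`. -/
def IsPrimeIdealSetOf {A : Type*} [CommRing A] (B : Subring A) (S : Set A) : Prop :=
  ∃ I : Ideal B, I.IsPrime ∧ Subtype.val '' (I : Set B) = S

/-- `Spec(R) = Spec(T)` for a subring `R` of `T`: a subset of `T` is a prime ideal of `T`
iff it is a prime ideal of `R`. -/
def SpecEq {T : Type*} [CommRing T] (R : Subring T) : Prop :=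
  ∀ S : Set T, (∃ J : Ideal T, J.IsPrime ∧ (J : Set T) = S) ↔ IsPrimeIdealSetOf R S
/-- An ideal `P` of `R` is divided if it is comparable with every ideal of `R`. -/
def Ideal.IsDivided {R : Type*} [CommRing R] (P : Ideal R) : Prop :=
  ∀ I : Ideal R, I ≤ P ∨ P ≤ I

/-- `R ∈ H` : the nilradical of `R` is a divided prime ideal. -/
def MemH (R : Type*) [CommRing R] : Prop :=
  (nilradical R).IsPrime ∧ (nilradical R).IsDivided
/-- The localization `R_{Nil(R)}` of `R` at its nilradical, given that the nilradical
is prime. -/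
abbrev LocAtNil (R : Type*) [CommRing R] (hp : (nilradical R).IsPrime) :=
  Localization (@Ideal.primeCompl R _ (nilradical R) hp)

/-- `φ(S)` : the image in `R_{Nil(R)}` of a subset `S ⊆ R` under the canonical map `r ↦ r/1`
(the restriction to `R` of the homomorphism `φ : T(R) → R_{Nil(R)}`). -/
def phiImage (R : Type*) [CommRing R] (hp : (nilradical R).IsPrime) (S : Set R) :
    Set (LocAtNil R hp) :=
  algebraMap R (LocAtNil R hp) '' S

/-- An ideal `P` of `R` is φ-strongly prime: for `x, y ∈ R_{Nil(R)}`, `xy ∈ φ(P)` implies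
`x ∈ φ(P)` or `y ∈ φ(P)`. -/
def PhiStronglyPrime {R : Type*} [CommRing R] (hp : (nilradical R).IsPrime) (P : Ideal R) :
    Prop :=
  ∀ x y : LocAtNil R hp, x * y ∈ phiImage R hp ↑P →
    x ∈ phiImage R hp ↑P ∨ y ∈ phiImage R hp ↑P

/-- `R` is a φ-pseudo-valuation ring: `R ∈ H` and every prime ideal of `R` is
φ-strongly prime. -/
def PhiPVR (R : Type*) [CommRing R] : Prop :=
  ∃ h : MemH R, ∀ P : Ideal R, P.IsPrime → PhiStronglyPrime h.1 P
/-- A Prüfer ring: every finitely generated ideal containing a non-zero-divisor is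
invertible (as a fractional ideal in the total quotient ring). -/
def IsPruferRing (A : Type*) [CommRing A] : Prop :=
  ∀ I : Ideal A, I.FG → (∃ x ∈ I, x ∈ nonZeroDivisors A) →
    ∃ J : FractionalIdeal (nonZeroDivisors A) (FractionRing A),
      (I : FractionalIdeal (nonZeroDivisors A) (FractionRing A)) * J = 1

/-- `R` is a φ-Prüfer ring: `R ∈ H` and `φ(R)` is a Prüfer ring. -/
def PhiPrufer (R : Type*) [CommRing R] : Prop :=
  ∃ h : MemH R, IsPruferRing ↥(algebraMap R (LocAtNil R h.1)).range

/-! Every prime ideal `P` of `R` is also an ideal of `T`, so `P T ⊆ P ⊆ R`. If some `t ∈ T` lay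
outside `R`, two distinct maximal ideals `M + M' = R` would give `t ∈ M t + M' t ⊆ R`; hence `R`
is local with maximal ideal `M`. In a local Prüfer ring, of two elements one of which is regular,
one divides the other. Applied in `φ(R)` to `m ∈ M \ Nil(R)` (a unit of `R_{Nil(R)}`) and
`a = m t ∈ M`, this gives `a ≡ m r` or `m ≡ a s` modulo `Nil(R)`. Since `Nil(R)` is a prime
ideal of `T` not containing `m`, the first case gives `t - r ∈ Nil(R)`, and the second makes
`s t ≡ 1` a unit of `R`, which forces `t ∈ R` because `M t ⊆ M`. -/

open IsLocalRing

theorem IsPruferRing.dvd_or_dvd {A : Type*} [CommRing A] [IsLocalRing A] (hA : IsPruferRing A)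
    {x : A} (hx : x ∈ nonZeroDivisors A) (y : A) : x ∣ y ∨ y ∣ x := by
  let K := FractionRing A
  let g := algebraMap A K
  have hg : Function.Injective g := IsFractionRing.injective A K
  let I : Ideal A := Ideal.span {x, y}
  have hxI : x ∈ I := Ideal.subset_span (by simp)
  have hyI : y ∈ I := Ideal.subset_span (by simp)
  obtain ⟨J, hIJ⟩ := hA I (Submodule.fg_span (Set.toFinite _)) ⟨x, hxI, hx⟩
  have mem_one : ∀ p ∈ I, ∀ w ∈ J, ∃ e : A, g e = g p * w := fun p hp w hw =>
    (FractionalIdeal.mem_one_iff _).1 <| hIJ ▸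
      FractionalIdeal.mul_mem_mul ((FractionalIdeal.mem_coeIdeal _).2 ⟨p, hp, rfl⟩) hw
  -- `1 = x u + y v` with `u, v ∈ J = I⁻¹`, and in a local ring one of `x u`, `y v` is a unit.
  have h1 : (1 : K) ∈
      (Submodule.span A {g x} ⊔ Submodule.span A {g y}) * (J : Submodule A K) := by
    rw [← Submodule.span_insert, ← Set.image_pair, ← IsLocalization.coeSubmodule_span,
      ← FractionalIdeal.coe_coeIdeal, ← FractionalIdeal.coe_mul, hIJ]
    exact (FractionalIdeal.mem_one_iff _).2 ⟨1, map_one g⟩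
  simp only [Submodule.sup_mul, Submodule.mem_sup, Submodule.mem_span_singleton_mul] at h1
  obtain ⟨_, ⟨u, hu, rfl⟩, _, ⟨v, hv, rfl⟩, h1⟩ := h1
  obtain ⟨e₁, he₁⟩ := mem_one x hxI u hu
  obtain ⟨e₂, he₂⟩ := mem_one y hyI v hv
  obtain ⟨e₃, he₃⟩ := mem_one y hyI u hu
  obtain ⟨e₄, he₄⟩ := mem_one x hxI v hv
  have hsum : e₁ + e₂ = 1 := hg (by rw [map_add, he₁, he₂, map_one, ← h1])
  rcases isUnit_or_isUnit_of_add_one hsum with h | h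
  · refine .inl (h.dvd_mul_right.1 ⟨e₃, hg ?_⟩)
    simp only [map_mul, he₁, he₃]; ring
  · refine .inr (h.dvd_mul_right.1 ⟨e₄, hg ?_⟩)
    simp only [map_mul, he₂, he₄]; ring

theorem exists_sub_mul_mem_or_sub_mul_mem {R : Type*} [CommRing R] [IsLocalRing R]
    {P : Ideal R} [P.IsPrime]
    (hP : IsPruferRing (algebraMap R (Localization.AtPrime P)).range)
    {m : R} (hm : m ∉ P) (a : R) : (∃ r, a - m * r ∈ P) ∨ (∃ s, m - a * s ∈ P) := by
  let f := algebraMap R (Localization.AtPrime P)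
  have : IsLocalRing f.range := .of_surjective' f.rangeRestrict f.rangeRestrict_surjective
  have hker : ∀ b, f.rangeRestrict b = 0 → b ∈ P := fun b hb =>
    (IsLocalization.AtPrime.to_map_mem_maximal_iff _ P b).1 <| by
      rw [← f.coe_rangeRestrict, hb]; exact zero_mem _
  have hx : f.rangeRestrict m ∈ nonZeroDivisors f.range :=
    mem_nonZeroDivisors_of_injective (f := f.range.subtype) Subtype.val_injective
      ((IsLocalization.AtPrime.isUnit_to_map_iff _ P m).2 hm).mem_nonZeroDivisors
  have sub_mul_mem_of_dvd :
      ∀ p q : R, f.rangeRestrict p ∣ f.rangeRestrict q → ∃ r, q - p * r ∈ P := by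
    rintro p q ⟨c, hc⟩
    obtain ⟨r, rfl⟩ := f.rangeRestrict_surjective c
    exact ⟨r, hker _ (by rw [map_sub, map_mul, hc, sub_self])⟩
  exact (hP.dvd_or_dvd hx _).imp (sub_mul_mem_of_dvd _ _) (sub_mul_mem_of_dvd _ _)

namespace SpecEq

variable {T : Type*} [CommRing T] {R : Subring T}

theorem exists_isPrime_coe_eq (h : SpecEq R) {P : Ideal R} (hP : P.IsPrime) :
    ∃ J : Ideal T, J.IsPrime ∧ (J : Set T) = Subtype.val '' (P : Set R) :=
  (h _).2 ⟨P, hP, rfl⟩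

theorem coe_mul_mem (h : SpecEq R) {P : Ideal R} (hP : P.IsPrime) {p : R} (hp : p ∈ P)
    (t : T) : (p : T) * t ∈ Subtype.val '' (P : Set R) := by
  obtain ⟨J, -, hJ⟩ := h.exists_isPrime_coe_eq hP
  rw [← hJ]
  exact J.mul_mem_right t (hJ ▸ ⟨p, hp, rfl⟩ : (p : T) ∈ (J : Set T))

theorem mem_of_coe_mul_mem (h : SpecEq R) {P : Ideal R} (hP : P.IsPrime) {m : R} (hm : m ∉ P)
    {x : T} (hx : (m : T) * x ∈ Subtype.val '' (P : Set R)) :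
    x ∈ Subtype.val '' (P : Set R) := by
  obtain ⟨J, hJ, hJP⟩ := h.exists_isPrime_coe_eq hP
  rw [← hJP] at hx ⊢
  refine (hJ.mem_or_mem hx).resolve_left fun hmJ => hm ?_
  rwa [← SetLike.mem_coe, hJP, Subtype.val_injective.mem_set_image] at hmJ

theorem isLocalRing (h : SpecEq R) {t : T} (ht : t ∉ R) : IsLocalRing R := by
  have : Nontrivial T := (subsingleton_or_nontrivial T).resolve_left fun _ =>
    ht (Subsingleton.elim 0 t ▸ R.zero_mem)
  obtain ⟨M, hM⟩ := Ideal.exists_maximal R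
  refine .of_unique_max_ideal ⟨M, hM, fun M' hM' => by_contra fun hne => ht ?_⟩
  obtain ⟨a, ha, b, hb, hab⟩ := Submodule.mem_sup.1
    ((hM'.coprime_of_ne hM hne).symm ▸ Submodule.mem_top : (1 : R) ∈ M' ⊔ M)
  obtain ⟨p, -, hp⟩ := h.coe_mul_mem hM'.isPrime ha t
  obtain ⟨q, -, hq⟩ := h.coe_mul_mem hM.isPrime hb t
  have : t = p + q := by rw [hp, hq, ← add_mul, ← Subring.coe_add, hab, Subring.coe_one, one_mul]
  exact this ▸ R.add_mem p.2 q.2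

theorem mem_of_isUnit_coe_eq_mul [IsLocalRing R] (h : SpecEq R) {u s : R} (hu : IsUnit u)
    {t : T} (hust : (u : T) = s * t) : t ∈ R := by
  by_cases hs : IsUnit s
  · obtain ⟨s, rfl⟩ := hs
    have : t = ((u * ↑s⁻¹ : R) : T) := by
      rw [Subring.coe_mul, hust, mul_comm ((s : R) : T), mul_assoc, ← Subring.coe_mul,
        Units.mul_inv, Subring.coe_one, mul_one]
    exact this ▸ SetLike.coe_mem _
  · obtain ⟨q, hqM, hq⟩ := h.coe_mul_mem (maximalIdeal.isMaximal R).isPrime hs t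
    rw [← hust, Subtype.val_inj] at hq
    exact absurd (hq ▸ hu) ((mem_maximalIdeal _).1 hqM)

end SpecEq

/-- Let `R` be a φ-Prüfer ring such that `Nil(R)` is not a maximal ideal
of `R`, and let `T` be a ring containing `R` with `Spec(R) = Spec(T)`.  Then `R = T`. -/
theorem stmt10 {T : Type*} [CommRing T] (R : Subring T)
    (hPruf : PhiPrufer ↥R) (hnm : ¬ (nilradical ↥R).IsMaximal)
    (hspec : SpecEq R) : R = ⊤ := by
  obtain ⟨hRH, hpruf⟩ := hPruf
  have hNil := hRH.1
  refine (Subring.eq_top_iff' R).2 fun t => by_contra fun ht => ?_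
  have := hspec.isLocalRing ht
  obtain ⟨m, hmM, hmN⟩ : ∃ m ∈ maximalIdeal R, m ∉ nilradical R :=
    SetLike.exists_of_lt <| (nilradical_le_prime _).lt_of_ne fun h => hnm (h ▸ inferInstance)
  obtain ⟨a, -, hat⟩ := hspec.coe_mul_mem (maximalIdeal.isMaximal R).isPrime hmM t
  rcases exists_sub_mul_mem_or_sub_mul_mem hpruf hmN a with ⟨r, hr⟩ | ⟨s, hs⟩
  · obtain ⟨n, -, hn⟩ := hspec.mem_of_coe_mul_mem hNil hmN (x := t - r)
      ⟨_, hr, by push_cast; rw [hat]; ring⟩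
    exact ht (by simpa [hn] using R.add_mem n.2 r.2)
  · obtain ⟨n, hn, hnt⟩ := hspec.mem_of_coe_mul_mem hNil hmN (x := 1 - t * s)
      ⟨_, hs, by push_cast; rw [hat]; ring⟩
    refine ht (hspec.mem_of_isUnit_coe_eq_mul (s := s) (mem_nilradical.1 hn).isUnit_one_sub ?_)
    push_cast; rw [hnt]; ring
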